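/- arXiv:1105.4396 — 2 statements merged into one kernel-verified Lean document; each statement's English description precedes it below -/
import Mathlib

section
/- For the MA(q) process with q > 2 and continuous i.i.d. innovations, the probability that the four conditions ξ_{i-1} < ξ_i, ξ_i > ξ_{i+1}, ξ_{i+1} < ξ_{i+2}, ξ_{i+2} > ξ_{i+3} all hold equals 1/16. -/
/-! Consecutive MA(q) errors telescope: `ξ_{a+1} - ξ_a = ε_{a+1} - ε_{a-q}`. The four conditions
therefore compare the pairs `(ε_{i-1-q}, ε_i)`, `(ε_{i+1}, ε_{i-q})`, `(ε_{i+1-q}, ε_{i+2})` and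
`(ε_{i+3}, ε_{i+2-q})`, whose eight indices are distinct once `q > 2`. Events built from disjoint
groups of independent variables are independent, and each comparison has probability `1/2`: an
i.i.d. pair is exchangeable and, the law being atomless, ties have probability zero. -/

open MeasureTheory ProbabilityTheory

/-- Error terms of an MA(q) process: `ξ i ω = ∑_{j=0}^q ε (i - j) ω`. -/
noncomputable def MAerr {Ω : Type*} (q : ℕ) (ε : ℤ → Ω → ℝ) (i : ℤ) (ω : Ω) : ℝ :=
  ∑ j ∈ Finset.range (q + 1), ε (i - (j : ℤ)) ω

lemma MAerr_succ_sub_MAerr {Ω : Type*} (q : ℕ) (ε : ℤ → Ω → ℝ) (a : ℤ) (ω : Ω) :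
    MAerr q ε (a + 1) ω - MAerr q ε a ω = ε (a + 1) ω - ε (a - q) ω := by
  simp only [MAerr, Finset.sum_range_succ' (fun j : ℕ => ε (a + 1 - j) ω),
    Finset.sum_range_succ (fun j : ℕ => ε (a - j) ω)]
  push_cast
  simp only [add_sub_add_right_eq_sub, sub_zero]
  ring

lemma MAerr_lt_MAerr_succ_iff {Ω : Type*} (q : ℕ) (ε : ℤ → Ω → ℝ) (a : ℤ) (ω : Ω) :
    MAerr q ε a ω < MAerr q ε (a + 1) ω ↔ ε (a - q) ω < ε (a + 1) ω := by
  rw [← sub_pos, MAerr_succ_sub_MAerr, sub_pos]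

lemma MAerr_succ_lt_MAerr_iff {Ω : Type*} (q : ℕ) (ε : ℤ → Ω → ℝ) (a : ℤ) (ω : Ω) :
    MAerr q ε (a + 1) ω < MAerr q ε a ω ↔ ε (a + 1) ω < ε (a - q) ω := by
  rw [← sub_neg, MAerr_succ_sub_MAerr, sub_neg]

namespace ProbabilityTheory

variable {Ω ι κ : Type*} {mΩ : MeasurableSpace Ω} {μ : Measure Ω}

theorem iIndep.measure_biInter_eq_prod {m : ι → MeasurableSpace Ω} (hle : ∀ i, m i ≤ mΩ)
    (h : iIndep m μ) (s : Finset κ) {S : κ → Set ι} (hS : (s : Set κ).PairwiseDisjoint S)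
    {E : κ → Set Ω} (hE : ∀ k ∈ s, MeasurableSet[⨆ i ∈ S k, m i] (E k)) :
    μ (⋂ k ∈ s, E k) = ∏ k ∈ s, μ (E k) := by
  classical
  induction s using Finset.induction_on with
  | empty => simp [h.isProbabilityMeasure.measure_univ]
  | insert k s hk ih =>
    have hdisj : Disjoint (S k) (⋃ j ∈ s, S j) :=
      Set.disjoint_iUnion₂_right.mpr fun j hj =>
        hS (by simp) (by simp [hj]) (ne_of_mem_of_not_mem hj hk).symm
    have hrest : MeasurableSet[⨆ i ∈ ⋃ j ∈ s, S j, m i] (⋂ j ∈ s, E j) :=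
      Finset.measurableSet_biInter s fun j hj =>
        (biSup_mono fun i hi => Set.mem_biUnion hj hi :
          ⨆ i ∈ S j, m i ≤ ⨆ i ∈ ⋃ j ∈ s, S j, m i) _ (hE j (by simp [hj]))
    rw [Finset.set_biInter_insert, Finset.prod_insert hk,
      (Indep_iff _ _ μ).mp (indep_iSup_of_disjoint hle h hdisj) _ _ (hE k (by simp)) hrest,
      ih (hS.subset (by simp)) fun j hj => hE j (by simp [hj])]

theorem iIndepFun.measure_biInter_lt_eq_prod {ε : ι → Ω → ℝ} (hmeas : ∀ i, Measurable (ε i))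
    (h : iIndepFun ε μ) (s : Finset κ) {a b : κ → ι}
    (hab : (s : Set κ).PairwiseDisjoint fun k => ({a k, b k} : Set ι)) :
    μ (⋂ k ∈ s, {ω | ε (a k) ω < ε (b k) ω}) = ∏ k ∈ s, μ {ω | ε (a k) ω < ε (b k) ω} := by
  refine ((iIndepFun_iff_iIndep _ _ _).mp h).measure_biInter_eq_prod
    (fun i => (hmeas i).comap_le) s hab fun k _ => ?_
  have hle : ∀ j ∈ ({a k, b k} : Set ι), MeasurableSpace.comap (ε j) inferInstance ≤
      ⨆ i ∈ ({a k, b k} : Set ι), MeasurableSpace.comap (ε i) inferInstance :=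
    fun j hj => le_iSup₂ (f := fun i (_ : i ∈ ({a k, b k} : Set ι)) =>
      MeasurableSpace.comap (ε i) inferInstance) j hj
  exact measurableSet_lt ((comap_measurable _).mono (hle _ (by simp)) le_rfl)
    ((comap_measurable _).mono (hle _ (by simp)) le_rfl)

theorem IndepFun.measure_eq_eq_zero {β : Type*} [MeasurableSpace β] [MeasurableEq β]
    [MeasurableSingletonClass β] [IsFiniteMeasure μ] {X Y : Ω → β} (hX : Measurable X)
    (hY : Measurable Y) (hXY : IndepFun X Y μ) (hatom : ∀ a, μ {ω | Y ω = a} = 0) :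
    μ {ω | X ω = Y ω} = 0 := by
  have hdiag : MeasurableSet {p : β × β | p.1 = p.2} := measurableSet_diagonal
  have hslice : ∀ x, μ.map Y (Prod.mk x ⁻¹' {p : β × β | p.1 = p.2}) = 0 := fun x => by
    rw [show Prod.mk x ⁻¹' {p : β × β | p.1 = p.2} = {x} from Set.ext fun _ => eq_comm,
      Measure.map_apply hY (measurableSet_singleton x)]
    exact hatom x
  rw [show {ω | X ω = Y ω} = (fun ω => (X ω, Y ω)) ⁻¹' {p | p.1 = p.2} from rfl,
    ← Measure.map_apply (hX.prodMk hY) hdiag,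
    (indepFun_iff_map_prod_eq_prod_map_map hX.aemeasurable hY.aemeasurable).mp hXY,
    Measure.prod_apply hdiag]
  simp only [hslice, lintegral_zero]

theorem IndepFun.measure_lt_eq_half [IsProbabilityMeasure μ] {X Y : Ω → ℝ}
    (hX : Measurable X) (hY : Measurable Y) (hXY : IndepFun X Y μ)
    (hid : IdentDistrib X Y μ μ) (hatom : ∀ a, μ {ω | Y ω = a} = 0) :
    μ {ω | X ω < Y ω} = 1 / 2 := by
  have hswap : μ {ω | Y ω < X ω} = μ {ω | X ω < Y ω} :=
    ((hid.symm.prodMk hid hXY.symm hXY).measure_mem_eq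
      (measurableSet_lt measurable_fst measurable_snd) :)
  have htie : μ {ω | X ω = Y ω}ᶜ = 1 :=
    (prob_compl_eq_one_iff (measurableSet_eq_fun hX hY)).mpr (hXY.measure_eq_eq_zero hX hY hatom)
  rw [ENNReal.eq_div_iff two_ne_zero ENNReal.ofNat_ne_top]
  calc 2 * μ {ω | X ω < Y ω} = μ {ω | X ω < Y ω} + μ {ω | Y ω < X ω} := by rw [hswap, two_mul]
    _ = μ ({ω | X ω < Y ω} ∪ {ω | Y ω < X ω}) :=
      (measure_union (Set.disjoint_left.mpr fun _ h h' => lt_asymm h h')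
        (measurableSet_lt hY hX)).symm
    _ = 1 := by
      rw [← htie]
      congr 1
      ext ω
      simp [lt_or_lt_iff_ne]

end ProbabilityTheory

/-- For `q > 2` with atomless i.i.d. innovations, the probability that
`ξ_{i-1} < ξ_i > ξ_{i+1} < ξ_{i+2} > ξ_{i+3}` equals `1/16`. -/
theorem MA_prob_dist2_joint
    {Ω : Type*} [MeasurableSpace Ω] (μ : Measure Ω) [IsProbabilityMeasure μ]
    (ε : ℤ → Ω → ℝ) (hmeas : ∀ i, Measurable (ε i))
    (hindep : iIndepFun ε μ)
    (hid : ∀ i j : ℤ, IdentDistrib (ε i) (ε j) μ μ)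
    (hatomless : ∀ (i : ℤ) (a : ℝ), μ {ω | ε i ω = a} = 0)
    (q : ℕ) (hq : 2 < q) (i : ℤ) :
    μ {ω | MAerr q ε (i - 1) ω < MAerr q ε i ω ∧ MAerr q ε i ω > MAerr q ε (i + 1) ω ∧
        MAerr q ε (i + 1) ω < MAerr q ε (i + 2) ω ∧
        MAerr q ε (i + 2) ω > MAerr q ε (i + 3) ω} = 1 / 16 := by
  let a : Fin 4 → ℤ := ![i - 1 - q, i + 1, i + 1 - q, i + 3]
  let b : Fin 4 → ℤ := ![i, i - q, i + 2, i + 2 - q]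
  have hevent : {ω | MAerr q ε (i - 1) ω < MAerr q ε i ω ∧ MAerr q ε i ω > MAerr q ε (i + 1) ω ∧
        MAerr q ε (i + 1) ω < MAerr q ε (i + 2) ω ∧ MAerr q ε (i + 2) ω > MAerr q ε (i + 3) ω} =
      ⋂ k ∈ Finset.univ, {ω | ε (a k) ω < ε (b k) ω} := by
    ext ω
    have h0 := MAerr_lt_MAerr_succ_iff q ε (i - 1) ω
    have h1 := MAerr_succ_lt_MAerr_iff q ε i ω
    have h2 := MAerr_lt_MAerr_succ_iff q ε (i + 1) ω
    have h3 := MAerr_succ_lt_MAerr_iff q ε (i + 2) ω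
    simp only [sub_add_cancel, add_assoc] at h0 h1 h2 h3
    norm_num at h2 h3
    simp [Fin.forall_fin_succ, a, b, h0, h1, h2, h3]
  have hdisj : ((Finset.univ : Finset (Fin 4)) : Set (Fin 4)).PairwiseDisjoint
      fun k => ({a k, b k} : Set ℤ) := by
    intro k _ l _ hkl
    fin_cases k <;> fin_cases l <;> simp_all [a, b] <;> omega
  have hhalf : ∀ k, μ {ω | ε (a k) ω < ε (b k) ω} = 1 / 2 := fun k =>
    (hindep.indepFun (by fin_cases k <;> simp [a, b] <;> omega)).measure_lt_eq_half
      (hmeas _) (hmeas _) (hid _ _) (hatomless _)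
  rw [hevent, hindep.measure_biInter_lt_eq_prod hmeas _ hdisj]
  simp only [hhalf, Finset.prod_const, Finset.card_univ, Fintype.card_fin]
  rw [one_div, one_div, ← ENNReal.inv_pow]
  norm_num
end

section
/- For the MA(q) process with continuous i.i.d. innovations, for every distance d with 2 ≤ d < q, the conditional probability that the next local maximum after a local maximum at ξ_i occurs exactly at ξ_{i+d} equals (d−1)/2^d. -/
open MeasureTheory ProbabilityTheory ENNReal

/-- A local maximum of the MA(q) error terms at index `i`. -/
def MAlocalMax {Ω : Type*} (q : ℕ) (ε : ℤ → Ω → ℝ) (i : ℤ) (ω : Ω) : Prop :=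
  MAerr q ε (i - 1) ω < MAerr q ε i ω ∧ MAerr q ε i ω > MAerr q ε (i + 1) ω

/-! Since `ξ m - ξ (m - 1) = ε m - ε (m - q - 1)`, whether `ξ` goes up at step `m` is decided by
comparing `ε m` with `ε (m - q - 1)`. For `d < q` the `d + 2` steps `i, …, i + d + 1` compare
disjoint pairs of innovations, so their signs are independent fair coins. A local maximum at
`i + k` is an up step at `i + k` followed by a down step, so "local maxima at `i` and `i + d` and
none in between" means that the word of signs is `up, down^m, up^(d - m), down` with `1 ≤ m < d`:
`d - 1` words of probability `2^-(d+2)` each, against probability `1/4` for a local maximum at `i`.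
-/

lemma MAerr_sub_MAerr_sub_one {Ω : Type*} (q : ℕ) (ε : ℤ → Ω → ℝ) (m : ℤ) (ω : Ω) :
    MAerr q ε m ω - MAerr q ε (m - 1) ω = ε m ω - ε (m - (q + 1)) ω := by
  have hm : MAerr q ε m ω + ε (m - (q + 1)) ω = ε m ω + MAerr q ε (m - 1) ω := by
    have h := (Finset.sum_range_succ (fun j : ℕ => ε (m - j) ω) (q + 1)).symm.trans
      (Finset.sum_range_succ' (fun j : ℕ => ε (m - j) ω) (q + 1))
    simp only [Nat.cast_add, Nat.cast_one, Nat.cast_zero, sub_zero, add_comm _ (1 : ℤ),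
      ← sub_sub] at h
    rw [MAerr, MAerr, show m - ((q : ℤ) + 1) = m - 1 - q by ring, h, add_comm]
  linarith

lemma MAlocalMax_iff {Ω : Type*} (q : ℕ) (ε : ℤ → Ω → ℝ) (m : ℤ) (ω : Ω) :
    MAlocalMax q ε m ω ↔
      ε (m - (q + 1)) ω < ε m ω ∧ ε (m + 1) ω < ε (m + 1 - (q + 1)) ω := by
  have h₀ := MAerr_sub_MAerr_sub_one q ε m ω
  have h₁ := MAerr_sub_MAerr_sub_one q ε (m + 1) ω
  rw [add_sub_cancel_right] at h₁
  unfold MAlocalMax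
  constructor <;> rintro ⟨_, _⟩ <;> constructor <;> linarith

lemma measurableSet_MAlocalMax {Ω : Type*} [MeasurableSpace Ω] {ε : ℤ → Ω → ℝ}
    (hmeas : ∀ i, Measurable (ε i)) (q : ℕ) (m : ℤ) :
    MeasurableSet {ω | MAlocalMax q ε m ω} := by
  have hξ : ∀ m, Measurable (MAerr q ε m) := fun m =>
    Finset.measurable_sum _ fun j _ => hmeas (m - j)
  exact (measurableSet_lt (hξ _) (hξ _)).inter (measurableSet_lt (hξ _) (hξ _))

namespace ProbabilityTheory

variable {Ω : Type*} [MeasurableSpace Ω] {μ : Measure Ω} {X Y : Ω → ℝ}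

lemma IndepFun.ae_ne [IsFiniteMeasure μ] (hX : Measurable X) (hY : Measurable Y)
    (hXY : IndepFun X Y μ)
    (hY₀ : ∀ a, μ {ω | Y ω = a} = 0) : ∀ᵐ ω ∂μ, X ω ≠ Y ω := by
  have hD : MeasurableSet {p : ℝ × ℝ | p.1 = p.2} :=
    measurableSet_eq_fun measurable_fst measurable_snd
  simp only [ae_iff, ne_eq, not_not]
  have hY₀' : ∀ a, μ (Y ⁻¹' {a}) = 0 := hY₀
  rw [show {ω | X ω = Y ω} = (fun ω => (X ω, Y ω)) ⁻¹' {p | p.1 = p.2} from rfl,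
    ← Measure.map_apply (hX.prodMk hY) hD,
    (indepFun_iff_map_prod_eq_prod_map_map hX.aemeasurable hY.aemeasurable).1 hXY,
    Measure.prod_apply hD]
  simp [Measure.map_apply hY (measurableSet_singleton _), hY₀']

lemma IndepFun.map_prodMk_swap [IsFiniteMeasure μ] (hX : Measurable X) (hY : Measurable Y)
    (hXY : IndepFun X Y μ)
    (hXY' : IdentDistrib X Y μ μ) :
    μ.map (fun ω => (Y ω, X ω)) = μ.map (fun ω => (X ω, Y ω)) := by
  rw [(indepFun_iff_map_prod_eq_prod_map_map hY.aemeasurable hX.aemeasurable).1 hXY.symm,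
    (indepFun_iff_map_prod_eq_prod_map_map hX.aemeasurable hY.aemeasurable).1 hXY, hXY'.map_eq]

lemma IndepFun.measure_lt_eq_inv_two [IsProbabilityMeasure μ] (hX : Measurable X)
    (hY : Measurable Y) (hXY : IndepFun X Y μ) (hXY' : IdentDistrib X Y μ μ)
    (hY₀ : ∀ a, μ {ω | Y ω = a} = 0) :
    μ {ω | X ω < Y ω} = 2⁻¹ := by
  have hlt : MeasurableSet {p : ℝ × ℝ | p.1 < p.2} := measurableSet_lt measurable_fst measurable_snd
  have hsymm : μ {ω | Y ω < X ω} = μ {ω | X ω < Y ω} := by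
    rw [show {ω | Y ω < X ω} = (fun ω => (Y ω, X ω)) ⁻¹' {p | p.1 < p.2} from rfl,
      show {ω | X ω < Y ω} = (fun ω => (X ω, Y ω)) ⁻¹' {p | p.1 < p.2} from rfl,
      ← Measure.map_apply (hY.prodMk hX) hlt, ← Measure.map_apply (hX.prodMk hY) hlt,
      hXY.map_prodMk_swap hX hY hXY']
  have hcompl : ({ω | X ω < Y ω}ᶜ : Set Ω) =ᵐ[μ] {ω | Y ω < X ω} := by
    filter_upwards [hXY.ae_ne hX hY hY₀] with ω hω
    change (¬X ω < Y ω) = (Y ω < X ω)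
    rw [not_lt, eq_iff_iff]
    exact ⟨fun h => lt_of_le_of_ne h hω.symm, le_of_lt⟩
  have hsum : μ {ω | X ω < Y ω} + μ {ω | X ω < Y ω}ᶜ = 1 :=
    prob_add_prob_compl (measurableSet_lt hX hY)
  rw [(measure_congr hcompl).trans hsymm, ← two_mul] at hsum
  exact ENNReal.eq_inv_of_mul_eq_one_left (by rwa [mul_comm])

lemma iIndepFun.iIndepFun_prodMk {ι κ β : Type*} [MeasurableSpace β] {f : ι → Ω → β}
    (hf : ∀ i, Measurable (f i)) (h : iIndepFun f μ) {a b : κ → ι}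
    (ha : a.Injective) (hb : b.Injective) (hab : ∀ k k', a k ≠ b k') :
    iIndepFun (fun k ω => (f (a k) ω, f (b k) ω)) μ := by
  classical
  have := h.isProbabilityMeasure
  let m : ι → MeasurableSpace Ω := fun x => MeasurableSpace.comap (f x) inferInstance
  have hpair : ∀ k (G : Set ι) {s : Set (β × β)}, a k ∈ G → b k ∈ G → MeasurableSet s →
      MeasurableSet[⨆ x ∈ G, m x] ((fun ω => (f (a k) ω, f (b k) ω)) ⁻¹' s) :=
    fun k G s haG hbG hs => ((measurable_iff_comap_le.2 (le_biSup m haG)).prodMk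
      (measurable_iff_comap_le.2 (le_biSup m hbG))) hs
  rw [iIndepFun_iff_measure_inter_preimage_eq_mul]
  intro S
  induction S using Finset.induction with
  | empty => simp
  | insert k S hk ih =>
    intro s hs
    rw [Finset.set_biInter_insert, Finset.prod_insert hk,
      ← ih fun k' hk' => hs k' (Finset.mem_insert_of_mem hk')]
    have hdisj : Disjoint ({a k, b k} : Set ι) (⋃ k' ∈ S, {a k', b k'}) := by
      simp only [Set.disjoint_left, Set.mem_insert_iff, Set.mem_singleton_iff, Set.mem_iUnion,
        not_exists]
      rintro x (rfl | rfl) k' hk' (h | h)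
      · exact hk (ha h ▸ hk')
      · exact hab k k' h
      · exact hab k' k h.symm
      · exact hk (hb h ▸ hk')
    have hblocks := indep_iSup_of_disjoint (fun x => (hf x).comap_le) h.iIndep hdisj
    refine (hblocks.indepSet_of_measurableSet ?_ ?_).measure_inter_eq_mul
    · exact hpair k _ (by simp) (by simp) (hs k (Finset.mem_insert_self k S))
    · refine MeasurableSet.biInter S.countable_toSet fun k' hk' =>
        hpair k' _ ?_ ?_ (hs k' (Finset.mem_insert_of_mem hk'))
      all_goals exact Set.mem_biUnion hk' (by simp)

end ProbabilityTheory

def IsPeakAt {n : ℕ} (s : Fin n → Bool) (k : ℕ) : Prop :=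
  ∃ h : k + 1 < n, s ⟨k, Nat.lt_of_succ_lt h⟩ = true ∧ s ⟨k + 1, h⟩ = false

/-- The sign word `up, down^m, up^(d - m), down`. -/
def stepPattern (d m : ℕ) (k : Fin (d + 2)) : Bool :=
  decide (k.val = 0 ∨ m < k.val ∧ k.val ≤ d)

lemma exists_eq_stepPattern {d : ℕ} (hd : 1 ≤ d) {s : Fin (d + 2) → Bool} (h₀ : IsPeakAt s 0)
    (h_d : IsPeakAt s d) (hno : ∀ j, 1 ≤ j → j < d → ¬IsPeakAt s j) :
    ∃ m ∈ Set.Ico 1 d, stepPattern d m = s := by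
  set w : ℕ → Bool := fun j => if h : j < d + 2 then s ⟨j, h⟩ else false
  have hw : ∀ j (h : j < d + 2), w j = s ⟨j, h⟩ := fun j h => dif_pos h
  obtain ⟨_, hs₀, hs₁⟩ := h₀
  obtain ⟨_, hs_d, hs_d₁⟩ := h_d
  rw [← hw] at hs₀ hs₁ hs_d hs_d₁
  have hmono : MonotoneOn w (Set.Icc 1 d) :=
    monotoneOn_of_le_succ Set.ordConnected_Icc fun j _ hj hj' => by
      rw [Order.succ_eq_add_one, Set.mem_Icc] at *
      refine Bool.le_iff_imp.2 fun h => by_contra fun hf => ?_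
      exact hno j hj.1 (by omega) ⟨by omega, by rwa [← hw], by rw [← hw]; simpa using hf⟩
  set m := Nat.findGreatest (fun j => w j = false) d
  have hm_spec : w m = false := Nat.findGreatest_spec (P := fun j => w j = false) hd hs₁
  have hm₁ : 1 ≤ m := Nat.le_findGreatest hd hs₁
  have hm_d : m < d := by
    refine lt_of_le_of_ne (Nat.findGreatest_le d) fun h => ?_
    rw [h, hs_d] at hm_spec
    exact Bool.noConfusion hm_spec
  refine ⟨m, ⟨hm₁, hm_d⟩, funext fun ⟨k, hk⟩ => ?_⟩
  rw [← hw k hk, stepPattern]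
  rcases Nat.eq_zero_or_pos k with rfl | hk₁
  · simpa using hs₀.symm
  by_cases hkm : k ≤ m
  · have : w k ≤ w m := hmono ⟨hk₁, by omega⟩ ⟨hm₁, hm_d.le⟩ hkm
    rw [hm_spec] at this
    rw [Bool.eq_false_of_le_false this]
    simp only [decide_eq_false_iff_not]
    omega
  by_cases hkd : k ≤ d
  · have : w k = true := by
      simpa using Nat.findGreatest_is_greatest (by omega : m < k) hkd
    rw [this]
    simp only [decide_eq_true_eq]
    omega
  · obtain rfl : k = d + 1 := by omega
    rw [hs_d₁]
    simp only [decide_eq_false_iff_not]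
    omega

def nextPeakPatterns (d : ℕ) : Set (Fin (d + 2) → Bool) :=
  {s | IsPeakAt s 0 ∧ IsPeakAt s d ∧ ∀ j, 1 ≤ j → j < d → ¬IsPeakAt s j}

lemma nextPeakPatterns_eq_image {d : ℕ} (hd : 1 ≤ d) :
    nextPeakPatterns d = stepPattern d '' Set.Ico 1 d := by
  ext s
  constructor
  · rintro ⟨h₀, h_d, hno⟩
    exact exists_eq_stepPattern hd h₀ h_d hno
  · rintro ⟨m, ⟨hm₁, hm_d⟩, rfl⟩
    refine ⟨⟨by omega, by simp [stepPattern], by simp [stepPattern]; omega⟩,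
      ⟨by omega, by simp [stepPattern]; omega, by simp [stepPattern]⟩, ?_⟩
    rintro j hj₁ hj_d ⟨_, h, h'⟩
    simp [stepPattern] at h h'
    omega

lemma injOn_stepPattern (d : ℕ) : Set.InjOn (stepPattern d) (Set.Ico 1 d) := by
  intro m hm m' hm' h
  simp only [Set.mem_Ico] at hm hm'
  have := congrFun h ⟨max m m', by omega⟩
  simp only [stepPattern, decide_eq_decide] at this
  omega

lemma ncard_nextPeakPatterns {d : ℕ} (hd : 1 ≤ d) : (nextPeakPatterns d).ncard = d - 1 := by
  rw [nextPeakPatterns_eq_image hd, (injOn_stepPattern d).ncard_image, Set.ncard_Ico_nat]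

/-- Entry `k` is `true` iff `ξ (i + k - 1) < ξ (i + k)`, by `MAerr_sub_MAerr_sub_one`. -/
noncomputable def MAupSigns {Ω : Type*} (q : ℕ) (ε : ℤ → Ω → ℝ) (i : ℤ) (n : ℕ) (ω : Ω) :
    Fin n → Bool :=
  fun k => decide (ε (i + k - (q + 1)) ω < ε (i + k) ω)

section MAupSigns

variable {Ω : Type*} [MeasurableSpace Ω] {μ : Measure Ω} {ε : ℤ → Ω → ℝ} {q n : ℕ} {i : ℤ}

lemma measurable_MAupSigns_apply (hmeas : ∀ i, Measurable (ε i)) (k : Fin n) :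
    Measurable fun ω => MAupSigns q ε i n ω k :=
  measurable_to_bool <| by
    simpa only [MAupSigns, Set.preimage, Set.mem_singleton_iff, decide_eq_true_eq]
      using measurableSet_lt (hmeas _) (hmeas _)

lemma measurable_MAupSigns (hmeas : ∀ i, Measurable (ε i)) : Measurable (MAupSigns q ε i n) :=
  measurable_pi_lambda _ (measurable_MAupSigns_apply hmeas)

lemma iIndepFun_MAupSigns (hmeas : ∀ i, Measurable (ε i)) (hindep : iIndepFun ε μ)
    (hn : n ≤ q + 1) : iIndepFun (fun k ω => MAupSigns q ε i n ω k) μ := by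
  have hpairs := hindep.iIndepFun_prodMk hmeas (a := fun k : Fin n => i + k)
    (b := fun k : Fin n => i + k - (q + 1)) (fun k k' h => by simpa [Fin.ext_iff] using h)
    (fun k k' h => by simpa [Fin.ext_iff] using h) (fun k k' => by omega)
  exact hpairs.comp (fun _ p => decide (p.2 < p.1))
    (fun _ => measurable_to_bool <| by
      simpa only [Set.preimage, Set.mem_singleton_iff, decide_eq_true_eq]
        using measurableSet_lt measurable_snd measurable_fst)

lemma measure_MAupSigns_apply_eq [IsProbabilityMeasure μ] (hmeas : ∀ i, Measurable (ε i))
    (hindep : iIndepFun ε μ)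
    (hid : ∀ i j : ℤ, IdentDistrib (ε i) (ε j) μ μ)
    (hatomless : ∀ (i : ℤ) (a : ℝ), μ {ω | ε i ω = a} = 0) (k : Fin n) (t : Bool) :
    μ {ω | MAupSigns q ε i n ω k = t} = 2⁻¹ := by
  have hne : i + k - (q + 1) ≠ i + k := by omega
  have hhalf := (hindep.indepFun hne).measure_lt_eq_inv_two (hmeas _) (hmeas _) (hid _ _)
    (hatomless _)
  cases t
  · have hcompl : {ω | MAupSigns q ε i n ω k = false}
        = {ω | ε (i + k - (q + 1)) ω < ε (i + k) ω}ᶜ := by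
      ext ω
      simp [MAupSigns]
    rw [hcompl, prob_compl_eq_one_sub (measurableSet_lt (hmeas _) (hmeas _)), hhalf,
      ENNReal.one_sub_inv_two]
  · simpa [MAupSigns] using hhalf

lemma measure_MAupSigns_preimage [IsProbabilityMeasure μ] (hmeas : ∀ i, Measurable (ε i))
    (hindep : iIndepFun ε μ)
    (hid : ∀ i j : ℤ, IdentDistrib (ε i) (ε j) μ μ)
    (hatomless : ∀ (i : ℤ) (a : ℝ), μ {ω | ε i ω = a} = 0) (hn : n ≤ q + 1)
    (A : Set (Fin n → Bool)) :
    μ (MAupSigns q ε i n ⁻¹' A) = A.ncard * 2⁻¹ ^ n := by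
  have hatom : ∀ s : Fin n → Bool, μ (MAupSigns q ε i n ⁻¹' {s}) = 2⁻¹ ^ n := fun s => by
    have hs : MAupSigns q ε i n ⁻¹' {s} = ⋂ k, (fun ω => MAupSigns q ε i n ω k) ⁻¹' {s k} := by
      ext ω
      simp [funext_iff]
    rw [hs, (iIndepFun_MAupSigns hmeas hindep hn).meas_iInter fun k =>
      ⟨{s k}, measurableSet_singleton _, rfl⟩]
    simp only [Set.preimage, Set.mem_singleton_iff,
      measure_MAupSigns_apply_eq hmeas hindep hid hatomless, Finset.prod_const, Finset.card_univ,
      Fintype.card_fin]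
  rw [Set.ncard_eq_toFinset_card A, ← A.toFinite.coe_toFinset,
    ← sum_measure_preimage_singleton _ fun s _ =>
      measurable_MAupSigns hmeas (measurableSet_singleton s)]
  simp [hatom]

lemma measure_MAupSigns_isPeakAt [IsProbabilityMeasure μ] (hmeas : ∀ i, Measurable (ε i))
    (hindep : iIndepFun ε μ)
    (hid : ∀ i j : ℤ, IdentDistrib (ε i) (ε j) μ μ)
    (hatomless : ∀ (i : ℤ) (a : ℝ), μ {ω | ε i ω = a} = 0) (hn : n ≤ q + 1) {k : ℕ}
    (hk : k + 1 < n) :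
    μ (MAupSigns q ε i n ⁻¹' {s | IsPeakAt s k}) = 2⁻¹ ^ 2 := by
  have hset : MAupSigns q ε i n ⁻¹' {s | IsPeakAt s k}
      = (fun ω => MAupSigns q ε i n ω ⟨k, by omega⟩) ⁻¹' {true}
        ∩ (fun ω => MAupSigns q ε i n ω ⟨k + 1, hk⟩) ⁻¹' {false} := by
    ext ω
    simp [IsPeakAt, hk]
  rw [hset, ((iIndepFun_MAupSigns hmeas hindep hn).indepFun (by simp)).measure_inter_preimage_eq_mul
    _ _ (measurableSet_singleton _) (measurableSet_singleton _), sq]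
  exact congr_arg₂ _ (measure_MAupSigns_apply_eq hmeas hindep hid hatomless _ _)
    (measure_MAupSigns_apply_eq hmeas hindep hid hatomless _ _)

lemma ae_MAlocalMax_iff_isPeakAt [IsFiniteMeasure μ] (hmeas : ∀ i, Measurable (ε i))
    (hindep : iIndepFun ε μ)
    (hatomless : ∀ (i : ℤ) (a : ℝ), μ {ω | ε i ω = a} = 0) :
    ∀ᵐ ω ∂μ, ∀ k : ℕ, k + 1 < n →
      (MAlocalMax q ε (i + k) ω ↔ IsPeakAt (MAupSigns q ε i n ω) k) := by
  have hne : ∀ᵐ ω ∂μ, ∀ m : ℤ, ε (m - (q + 1)) ω ≠ ε m ω := ae_all_iff.2 fun m =>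
    (hindep.indepFun (by omega)).ae_ne (hmeas _) (hmeas _) (hatomless _)
  filter_upwards [hne] with ω hω k hk
  have hω' := hω (i + k + 1)
  rw [MAlocalMax_iff, IsPeakAt, exists_prop_of_true hk]
  simp only [MAupSigns, Nat.cast_add, Nat.cast_one, decide_eq_true_eq, decide_eq_false_iff_not,
    not_lt, ← add_assoc]
  exact and_congr_right' ⟨le_of_lt, fun h => lt_of_le_of_ne h hω'.symm⟩

lemma MAlocalMax_ae_eq_preimage_isPeakAt_zero [IsFiniteMeasure μ] (hmeas : ∀ i, Measurable (ε i))
    (hindep : iIndepFun ε μ) (hatomless : ∀ (i : ℤ) (a : ℝ), μ {ω | ε i ω = a} = 0)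
    (hn : 1 < n) :
    ({ω | MAlocalMax q ε i ω} : Set Ω) =ᵐ[μ] MAupSigns q ε i n ⁻¹' {s | IsPeakAt s 0} := by
  filter_upwards [ae_MAlocalMax_iff_isPeakAt hmeas hindep hatomless] with ω hω
  have h₀ := hω 0 hn
  rw [Nat.cast_zero, add_zero] at h₀
  exact propext h₀

lemma nextMAlocalMax_ae_eq_preimage_nextPeakPatterns [IsFiniteMeasure μ] {d : ℕ}
    (hmeas : ∀ i, Measurable (ε i)) (hindep : iIndepFun ε μ)
    (hatomless : ∀ (i : ℤ) (a : ℝ), μ {ω | ε i ω = a} = 0) :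
    ({ω | MAlocalMax q ε i ω} ∩ {ω | MAlocalMax q ε (i + d) ω ∧
        ∀ k : ℤ, 1 ≤ k → k < (d : ℤ) → ¬MAlocalMax q ε (i + k) ω} : Set Ω)
      =ᵐ[μ] MAupSigns q ε i (d + 2) ⁻¹' nextPeakPatterns d := by
  filter_upwards [ae_MAlocalMax_iff_isPeakAt (n := d + 2) hmeas hindep hatomless] with ω hω
  have h₀ := hω 0 (by omega)
  rw [Nat.cast_zero, add_zero] at h₀
  refine propext (and_congr h₀ (and_congr (hω d (by omega)) ⟨fun h j hj₁ hj_d hj => ?_,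
    fun h k hk₁ hk_d hk => ?_⟩))
  · exact h j (by omega) (by omega) ((hω j (by omega)).2 hj)
  · lift k to ℕ using (by omega)
    exact h k (by omega) (by omega) ((hω k (by omega)).1 hk)

end MAupSigns

/-- For `2 ≤ d < q` with atomless i.i.d. innovations, the conditional probability that
the next local maximum after a local maximum at `i` occurs exactly at distance `d`
equals `(d-1)/2^d`. -/
theorem MA_cond_prob_dist
    {Ω : Type*} [MeasurableSpace Ω] (μ : Measure Ω) [IsProbabilityMeasure μ]
    (ε : ℤ → Ω → ℝ) (hmeas : ∀ i, Measurable (ε i))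
    (hindep : iIndepFun ε μ)
    (hid : ∀ i j : ℤ, IdentDistrib (ε i) (ε j) μ μ)
    (hatomless : ∀ (i : ℤ) (a : ℝ), μ {ω | ε i ω = a} = 0)
    (d q : ℕ) (hd : 2 ≤ d) (hq : d < q) (i : ℤ) :
    μ[|{ω | MAlocalMax q ε i ω}]
      {ω | MAlocalMax q ε (i + d) ω ∧
        ∀ k : ℤ, 1 ≤ k → k < (d : ℤ) → ¬MAlocalMax q ε (i + k) ω}
      = ((d : ℝ≥0∞) - 1) / 2 ^ d := by
  have hn : d + 2 ≤ q + 1 := by omega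
  rw [cond_apply (measurableSet_MAlocalMax hmeas q i),
    measure_congr (MAlocalMax_ae_eq_preimage_isPeakAt_zero (n := d + 2) hmeas hindep hatomless
      (by omega)),
    measure_congr (nextMAlocalMax_ae_eq_preimage_nextPeakPatterns hmeas hindep hatomless),
    measure_MAupSigns_isPeakAt hmeas hindep hid hatomless hn (by omega),
    measure_MAupSigns_preimage hmeas hindep hid hatomless hn, ncard_nextPeakPatterns (by omega),
    ENNReal.natCast_sub, Nat.cast_one, pow_add]
  calc (2⁻¹ ^ 2)⁻¹ * (((d : ℝ≥0∞) - 1) * (2⁻¹ ^ d * 2⁻¹ ^ 2))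
      = ((d : ℝ≥0∞) - 1) * 2⁻¹ ^ d * ((2⁻¹ ^ 2)⁻¹ * 2⁻¹ ^ 2) := by ring
    _ = ((d : ℝ≥0∞) - 1) / 2 ^ d := by
      rw [ENNReal.inv_mul_cancel (by simp) (by simp), mul_one, div_eq_mul_inv, ENNReal.inv_pow]
end
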